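/- arXiv:1509.02087 — 8 statements merged into one kernel-verified Lean document; each statement's English description precedes it below -/
import Mathlib

section
/- Let S be a finite set with |S| = n and let d ≤ n be a nonnegative integer. If a family F of subsets of S shatters no (d+1)-element subset of S (i.e. F has VC-dimension at most d), then |F| ≤ binom(n,0) + binom(n,1) + ... + binom(n,d). -/
open Finset

namespace Finset

variable {α : Type*} [DecidableEq α]

/-- A shattered set of size greater than `d` has a shattered subset of size exactly `d + 1`. -/
lemma vcDim_le_of_forall_card_eq_not_shatters {𝒜 : Finset (Finset α)} {d : ℕ}
    (h : ∀ s : Finset α, #s = d + 1 → ¬ 𝒜.Shatters s) : 𝒜.vcDim ≤ d := by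
  refine Finset.sup_le fun s hs ↦ ?_
  by_contra! hds
  obtain ⟨t, hts, ht⟩ := exists_subset_card_eq (show d + 1 ≤ #s from hds)
  exact h t ht ((mem_shatterer.1 hs).mono_right hts)

end Finset

theorem sauer_shelah_bound_general {α : Type*} [Fintype α] [DecidableEq α] (n d : ℕ)
    (hcard : Fintype.card α = n) (F : Finset (Finset α))
    (hF : ∀ A : Finset α, A.card = d + 1 → ¬ F.Shatters A) :
    F.card ≤ ∑ k ∈ Finset.range (d + 1), n.choose k := by
  subst hcard
  calc #F ≤ #F.shatterer := F.card_le_card_shatterer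
    _ ≤ ∑ k ∈ Iic F.vcDim, (Fintype.card α).choose k := card_shatterer_le_sum_vcDim
    _ ≤ ∑ k ∈ Iic d, (Fintype.card α).choose k :=
        sum_le_sum_of_subset (Iic_subset_Iic.2 (vcDim_le_of_forall_card_eq_not_shatters hF))
    _ = ∑ k ∈ range (d + 1), (Fintype.card α).choose k := by rw [Nat.range_succ_eq_Iic]

/-- **Sauer–Shelah / Vapnik–Chervonenkis lemma.** If a family `F` of subsets of a finite
set `S` with `|S| = n` shatters no `(d+1)`-element subset of `S`, then
`|F| ≤ binom(n,0) + ⋯ + binom(n,d)`. -/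
theorem sauer_shelah_bound {α : Type*} [Fintype α] [DecidableEq α] (n d : ℕ)
    (hdn : d ≤ n) (hcard : Fintype.card α = n) (F : Finset (Finset α))
    (hF : ∀ A : Finset α, A.card = d + 1 → ¬ F.Shatters A) :
    F.card ≤ ∑ k ∈ Finset.range (d + 1), n.choose k :=
  sauer_shelah_bound_general n d hcard F hF
end

section
/- Let S be a finite set with |S| = n ≥ 2 and let F be a family of subsets of S with |F| = m that shatters every 2-element subset of S. Then n ≤ binom(m, ⌊m/2⌋). -/
/-!
Send each point `x` to the set of members of `F` containing it. Since `F` shatters every pair,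
for `x ≠ y` some member of `F` contains `y` but not `x`, so these sets are pairwise incomparable:
the map is injective and its image is an antichain in the power set of `F`. Sperner's theorem
bounds that antichain by `binom(|F|, ⌊|F|/2⌋)`.
-/

open Finset

namespace Finset

variable {α : Type*} [DecidableEq α]

lemma Shatters.exists_mem_notMem_of_pair {F : Finset (Finset α)} {x y : α} (hxy : x ≠ y)
    (h : F.Shatters {x, y}) : ∃ E ∈ F, y ∈ E ∧ x ∉ E := by
  obtain ⟨E, hE, hinter⟩ :=
    h.exists_inter_eq_singleton (mem_insert_of_mem (mem_singleton_self y))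
  refine ⟨E, hE, (mem_inter.1 (hinter ▸ mem_singleton_self y)).2, fun hx => hxy ?_⟩
  have hx' : x ∈ {x, y} ∩ E := mem_inter.2 ⟨mem_insert_self x {y}, hx⟩
  rwa [hinter, mem_singleton] at hx'

def membersContaining (F : Finset (Finset α)) (x : α) : Finset F :=
  univ.filter fun E => x ∈ E.1

lemma eq_of_membersContaining_subset {F : Finset (Finset α)}
    (hF : ∀ x y : α, x ≠ y → ∃ E ∈ F, y ∈ E ∧ x ∉ E) {x y : α}
    (hsub : F.membersContaining x ⊆ F.membersContaining y) : x = y := by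
  by_contra hxy
  obtain ⟨E, hE, hxE, hyE⟩ := hF y x (Ne.symm hxy)
  have hmem : (⟨E, hE⟩ : F) ∈ F.membersContaining y :=
    hsub (by simpa [membersContaining] using hxE)
  simp [membersContaining, hyE] at hmem

lemma card_le_choose_of_separates [Fintype α] (F : Finset (Finset α))
    (hF : ∀ x y : α, x ≠ y → ∃ E ∈ F, y ∈ E ∧ x ∉ E) :
    Fintype.card α ≤ (#F).choose (#F / 2) := by
  have hinj : Function.Injective F.membersContaining := fun x y hxy =>
    eq_of_membersContaining_subset hF hxy.subset
  have hanti : IsAntichain (· ⊆ ·) (SetLike.coe (univ.image F.membersContaining)) := by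
    rintro _ hA _ hB hne hsub
    obtain ⟨x, -, rfl⟩ := mem_image.1 hA
    obtain ⟨y, -, rfl⟩ := mem_image.1 hB
    exact hne (congrArg _ (eq_of_membersContaining_subset hF hsub))
  calc Fintype.card α = #(univ.image F.membersContaining) := by
        rw [card_image_of_injective _ hinj, card_univ]
    _ ≤ (Fintype.card F).choose (Fintype.card F / 2) := hanti.sperner
    _ = (#F).choose (#F / 2) := by rw [Fintype.card_coe]

end Finset

theorem card_le_central_binom_of_shatters_pairs_general {α : Type*} [Fintype α] [DecidableEq α]
    (n m : ℕ) (hcard : Fintype.card α = n) (F : Finset (Finset α))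
    (hm : F.card = m) (hF : ∀ A : Finset α, A.card = 2 → F.Shatters A) :
    n ≤ m.choose (m / 2) := by
  subst hcard hm
  exact card_le_choose_of_separates F fun x y hxy =>
    (hF _ (card_pair hxy)).exists_mem_notMem_of_pair hxy

/-- If `|S| = n ≥ 2` and a family `F` of subsets of `S` with `|F| = m` shatters every
2-element subset of `S`, then `n ≤ binom(m, ⌊m/2⌋)`. -/
theorem card_le_central_binom_of_shatters_pairs {α : Type*} [Fintype α] [DecidableEq α]
    (n m : ℕ) (hn : 2 ≤ n) (hcard : Fintype.card α = n) (F : Finset (Finset α))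
    (hm : F.card = m) (hF : ∀ A : Finset α, A.card = 2 → F.Shatters A) :
    n ≤ m.choose (m / 2) :=
  card_le_central_binom_of_shatters_pairs_general n m hcard F hm hF
end

section
/- Let l ≥ 1 be an integer, let S be a finite set with |S| = n ≥ 2, and let F be a family of subsets of S with |F| = 2l − 1. If F shatters every 2-element subset of S, then n < binom(2l−1, l−1). -/
/-!
Encode each point `x` by the subfamily of `F` of sets containing it. Shattering `{x, y}` makes the
codes of distinct points cross (all four Venn regions inside `F` are nonempty), so the `n` codes
together with their complements form an antichain of `2n` subsets of `F`, and Sperner's theorem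
bounds `2n` by `C(2l - 1, l - 1)`.
-/

open Finset

namespace Finset

section Crosses

variable {β : Type*} [Fintype β] [DecidableEq β] {s u : Finset β}

def Crosses (s u : Finset β) : Prop :=
  (s ∩ u).Nonempty ∧ (s \ u).Nonempty ∧ (u \ s).Nonempty ∧ (s ∪ u)ᶜ.Nonempty

theorem Crosses.symm (h : Crosses s u) : Crosses u s := by
  obtain ⟨h₁, h₂, h₃, h₄⟩ := h
  exact ⟨inter_comm s u ▸ h₁, h₃, h₂, union_comm s u ▸ h₄⟩

theorem Crosses.compl_left (h : Crosses s u) : Crosses sᶜ u := by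
  obtain ⟨h₁, h₂, h₃, h₄⟩ := h
  refine ⟨?_, ?_, ?_, ?_⟩
  · rwa [inter_comm, ← sdiff_eq_inter_compl]
  · rwa [sdiff_eq_inter_compl, ← compl_union]
  · rwa [sdiff_compl, inf_eq_inter, inter_comm]
  · rwa [compl_union, compl_compl, ← sdiff_eq_inter_compl]

theorem Crosses.compl_right (h : Crosses s u) : Crosses s uᶜ :=
  h.symm.compl_left.symm

theorem Crosses.not_subset (h : Crosses s u) : ¬s ⊆ u :=
  sdiff_nonempty.1 h.2.1

theorem Crosses.ne_compl (h : Crosses s u) : s ≠ uᶜ := by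
  rintro rfl
  simpa [inter_comm] using h.1

theorem Crosses.nonempty (h : Crosses s u) : s.Nonempty :=
  h.1.mono inter_subset_left

theorem Crosses.compl_nonempty (h : Crosses s u) : sᶜ.Nonempty :=
  h.2.2.2.mono (compl_subset_compl.2 subset_union_left)

theorem two_mul_card_le_choose_of_pairwise_crosses {𝒞 : Finset (Finset β)}
    (h𝒞 : (𝒞 : Set (Finset β)).Pairwise Crosses) (hcard : 1 < #𝒞) :
    2 * #𝒞 ≤ (Fintype.card β).choose (Fintype.card β / 2) := by
  have hcrosses : ∀ s ∈ 𝒞, ∃ u, Crosses s u := fun s hs ↦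
    let ⟨u, hu, hus⟩ := exists_mem_ne hcard s
    ⟨u, h𝒞 hs hu hus.symm⟩
  have hdisj : Disjoint 𝒞 (𝒞.image compl) := by
    refine disjoint_left.2 fun s hs hs' ↦ ?_
    obtain ⟨u, hu, rfl⟩ := mem_image.1 hs'
    obtain hself | hne := eq_or_ne uᶜ u
    · obtain ⟨v, huv⟩ := hcrosses u hu
      exact huv.nonempty.ne_empty (le_compl_self.1 (by rw [hself]))
    · exact (h𝒞 hs hu hne).ne_compl rfl
  have hanti : IsAntichain (· ⊆ ·) ((𝒞 ∪ 𝒞.image compl : Finset _) : Set (Finset β)) := by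
    rintro a ha b hb hab hsub
    simp only [coe_union, coe_image, Set.mem_union, Set.mem_image, mem_coe] at ha hb
    rcases ha with ha | ⟨s, hs, rfl⟩ <;> rcases hb with hb | ⟨u, hu, rfl⟩
    · exact (h𝒞 ha hb hab).not_subset hsub
    · obtain rfl | hne := eq_or_ne a u
      · obtain ⟨v, hav⟩ := hcrosses a ha
        exact hav.nonempty.ne_empty (le_compl_self.1 hsub)
      · exact (h𝒞 ha hu hne).compl_right.not_subset hsub
    · obtain rfl | hne := eq_or_ne s b
      · obtain ⟨v, hsv⟩ := hcrosses s hs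
        exact hsv.compl_nonempty.ne_empty (le_compl_self.1 (by rwa [compl_compl]))
      · exact (h𝒞 hs hb hne).compl_left.not_subset hsub
    · exact (h𝒞 hs hu (ne_of_apply_ne _ hab)).compl_left.compl_right.not_subset hsub
  calc 2 * #𝒞 = #(𝒞 ∪ 𝒞.image compl) := by
        rw [card_union_of_disjoint hdisj, card_image_of_injective _ compl_injective, two_mul]
    _ ≤ _ := hanti.sperner

end Crosses

section Shatters

variable {α : Type*} [DecidableEq α] {𝒜 : Finset (Finset α)} {s t : Finset α} {x y : α}

theorem Shatters.exists_mem_iff (h : 𝒜.Shatters s) (ht : t ⊆ s) :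
    ∃ u ∈ 𝒜, ∀ a ∈ s, (a ∈ u ↔ a ∈ t) := by
  obtain ⟨u, hu, rfl⟩ := h ht
  exact ⟨u, hu, fun a ha ↦ by simp [ha]⟩

def setsContaining (𝒜 : Finset (Finset α)) (x : α) : Finset 𝒜 := {E | x ∈ E.1}

theorem crosses_setsContaining (h : 𝒜.Shatters {x, y}) (hxy : x ≠ y) :
    Crosses (𝒜.setsContaining x) (𝒜.setsContaining y) := by
  have trace : ∀ t : Finset α, t ⊆ {x, y} →
      ∃ E : 𝒜, (x ∈ E.1 ↔ x ∈ t) ∧ (y ∈ E.1 ↔ y ∈ t) := fun t ht ↦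
    let ⟨E, hE, hmem⟩ := h.exists_mem_iff ht
    ⟨⟨E, hE⟩, hmem x (by simp), hmem y (by simp)⟩
  obtain ⟨E₁, hx₁, hy₁⟩ := trace {x, y} subset_rfl
  obtain ⟨E₂, hx₂, hy₂⟩ := trace {x} (by simp)
  obtain ⟨E₃, hx₃, hy₃⟩ := trace {y} (by simp)
  obtain ⟨E₄, hx₄, hy₄⟩ := trace ∅ (empty_subset _)
  refine ⟨⟨E₁, ?_⟩, ⟨E₂, ?_⟩, ⟨E₃, ?_⟩, ⟨E₄, ?_⟩⟩ <;>
    simp_all [setsContaining, hxy.symm]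

end Shatters

end Finset

theorem lt_choose_of_shatters_pairs_odd_general {α : Type*} [Fintype α] [DecidableEq α]
    (l n : ℕ) (hn : 2 ≤ n) (hcard : Fintype.card α = n)
    (F : Finset (Finset α)) (hFcard : F.card = 2 * l - 1)
    (hF : ∀ A : Finset α, A.card = 2 → F.Shatters A) :
    n < (2 * l - 1).choose (l - 1) := by
  have hcross : ∀ x y, x ≠ y → Crosses (F.setsContaining x) (F.setsContaining y) :=
    fun x y hxy ↦ crosses_setsContaining (hF _ (card_pair hxy)) hxy
  have hinj : Function.Injective F.setsContaining := fun x y hxy ↦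
    by_contra fun hne ↦ (hcross x y hne).not_subset hxy.le
  have hpairwise : (univ.image F.setsContaining : Set (Finset F)).Pairwise Crosses := by
    rw [coe_image, hinj.injOn.pairwise_image]
    exact fun x _ y _ hxy ↦ hcross x y hxy
  have hsperner := two_mul_card_le_choose_of_pairwise_crosses hpairwise
    (by rw [card_image_of_injective _ hinj, card_univ]; omega)
  rw [card_image_of_injective _ hinj, card_univ, hcard, Fintype.card_coe, hFcard,
    show (2 * l - 1) / 2 = l - 1 by omega] at hsperner
  omega

/-- If `l ≥ 1`, `|S| = n ≥ 2` and `F` is a family of subsets of `S` with `|F| = 2l - 1`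
shattering every 2-element subset of `S`, then `n < binom(2l-1, l-1)`. -/
theorem lt_choose_of_shatters_pairs_odd {α : Type*} [Fintype α] [DecidableEq α]
    (l n : ℕ) (hl : 1 ≤ l) (hn : 2 ≤ n) (hcard : Fintype.card α = n)
    (F : Finset (Finset α)) (hFcard : F.card = 2 * l - 1)
    (hF : ∀ A : Finset α, A.card = 2 → F.Shatters A) :
    n < (2 * l - 1).choose (l - 1) :=
  lt_choose_of_shatters_pairs_odd_general l n hn hcard F hFcard hF
end

section
/- Let l ≥ 1 be an integer and let n satisfy binom(2l−1, l−1) < n ≤ binom(2l+1, l). Let S be a finite set with |S| = n. Then every family of subsets of S shattering every 2-element subset of S has cardinality at least 2l, and there exists a family of subsets of S of cardinality at most 2l + 2 shattering every 2-element subset of S. In other words, 2l ≤ C(2,n) ≤ 2l + 2. -/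
/-!
Lower bound: if `F` shatters every pair, then for `x ≠ y` some member of `F` contains `x` but
not `y`, so the traces `{E ∈ F | x ∈ E}` form an antichain of `|S|` distinct subsets of `F`.
Sperner's theorem gives `n ≤ binom(|F|, ⌊|F|/2⌋)`, which is at most `binom(2l-1, l-1)` when
`|F| < 2l`.

Upper bound: assign to the points of `S` distinct `(l+1)`-subsets of a `(2l+2)`-set `I`, all
containing a fixed point `∗`; there are `binom(2l+1, l)` of them. Each `i ∈ I` yields the set of
points whose subset contains `i`. For two points the subsets meet (at `∗`), neither contains the
other (same size), and their union misses a point of `I` (it has at most `2l+1` elements), so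
these `2l+2` sets realise all four membership patterns on every pair.
-/

open Finset Function

section

variable {α ι : Type*} [DecidableEq α]

lemma Finset.shatters_pair_iff {F : Finset (Finset α)} {x y : α} (hxy : x ≠ y) :
    F.Shatters {x, y} ↔ ∀ p q : Prop, ∃ E ∈ F, (x ∈ E ↔ p) ∧ (y ∈ E ↔ q) := by
  classical
  constructor
  · intro h p q
    obtain ⟨E, hE, hEt⟩ := h (filter_subset (fun a => a = x ∧ p ∨ a = y ∧ q) {x, y})
    have hmem : ∀ a, a ∈ ({x, y} : Finset α) ∩ E ↔
        a ∈ filter (fun a => a = x ∧ p ∨ a = y ∧ q) {x, y} := fun a => by rw [hEt]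
    refine ⟨E, hE, ?_, ?_⟩
    · simpa [hxy] using hmem x
    · simpa [hxy.symm] using hmem y
  · intro h t ht
    obtain ⟨E, hE, hx, hy⟩ := h (x ∈ t) (y ∈ t)
    refine ⟨E, hE, ext fun a => ?_⟩
    have := @ht a
    simp only [mem_inter, mem_insert, mem_singleton] at this ⊢
    grind

lemma Nat.choose_half_le_choose_half {m k : ℕ} (h : m ≤ k) :
    m.choose (m / 2) ≤ k.choose (k / 2) :=
  (Nat.choose_le_choose _ h).trans (Nat.choose_le_middle _ _)

section Sperner

variable [Fintype α]

lemma card_le_choose_half_of_separating {F : Finset (Finset α)}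
    (hF : ∀ x y, x ≠ y → ∃ E ∈ F, x ∈ E ∧ y ∉ E) :
    Fintype.card α ≤ F.card.choose (F.card / 2) := by
  let trace : α → Finset F := fun x => {E | x ∈ (E : Finset α)}
  have trace_subset : ∀ x y, trace x ⊆ trace y → x = y := by
    intro x y hsub
    by_contra hxy
    obtain ⟨E, hE, hx, hy⟩ := hF x y hxy
    have hyE := hsub (show (⟨E, hE⟩ : F) ∈ trace x by simpa [trace] using hx)
    simp [trace] at hyE
    exact hy hyE
  have trace_injective : Injective trace := fun x y h => trace_subset x y h.subset
  have antichain :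
      IsAntichain (· ⊆ ·) ((univ.image trace : Finset (Finset F)) : Set (Finset F)) := by
    rw [coe_image]
    rintro _ ⟨x, -, rfl⟩ _ ⟨y, -, rfl⟩ hne hsub
    exact hne (congrArg trace (trace_subset x y hsub))
  simpa [card_image_of_injective _ trace_injective] using antichain.sperner

lemma le_card_of_shatters_pairs {l : ℕ} (hα : (2 * l - 1).choose (l - 1) < Fintype.card α)
    {F : Finset (Finset α)} (hF : ∀ A : Finset α, A.card = 2 → F.Shatters A) :
    2 * l ≤ F.card := by
  by_contra! hsmall
  have separating : ∀ x y, x ≠ y → ∃ E ∈ F, x ∈ E ∧ y ∉ E := fun x y hxy => by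
    simpa using (shatters_pair_iff hxy).1 (hF _ (card_pair hxy)) True False
  have hsperner := card_le_choose_half_of_separating separating
  have hmono := Nat.choose_half_le_choose_half (show F.card ≤ 2 * l - 1 by omega)
  rw [show (2 * l - 1) / 2 = l - 1 by omega] at hmono
  omega

end Sperner

section Dual

variable [Fintype α] [Fintype ι] [DecidableEq ι]

def dualFamily (g : α → Finset ι) : Finset (Finset α) :=
  univ.image fun i => ({x | i ∈ g x} : Finset α)

lemma card_dualFamily_le (g : α → Finset ι) : (dualFamily g).card ≤ Fintype.card ι :=
  card_image_le

lemma dualFamily_shatters_pair_iff {g : α → Finset ι} {x y : α} (hxy : x ≠ y) :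
    (dualFamily g).Shatters {x, y} ↔
      ∀ p q : Prop, ∃ i, (i ∈ g x ↔ p) ∧ (i ∈ g y ↔ q) := by
  simp [shatters_pair_iff hxy, dualFamily]

lemma dualFamily_shatters_of_intersecting {k : ℕ} {g : α → Finset ι} (hg : Injective g)
    (hcard : ∀ x, (g x).card = k) (hmeet : ∀ x y, (g x ∩ g y).Nonempty)
    (hk : 2 * k ≤ Fintype.card ι) {A : Finset α} (hA : A.card = 2) :
    (dualFamily g).Shatters A := by
  obtain ⟨x, y, hxy, rfl⟩ := card_eq_two.1 hA
  have only_left : ∀ x y, x ≠ y → ∃ i, i ∈ g x ∧ i ∉ g y := fun x y hxy => by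
    by_contra! hsub
    exact hxy (hg (eq_of_subset_of_card_le hsub (by rw [hcard, hcard])))
  have neither : ∃ i, i ∉ g x ∧ i ∉ g y := by
    have hunion : (g x ∪ g y).card < Fintype.card ι := by
      have hsum := card_union_add_card_inter (g x) (g y)
      have hpos := (hmeet x y).card_pos
      rw [hcard, hcard] at hsum
      omega
    obtain ⟨i, -, hi⟩ := exists_mem_notMem_of_card_lt_card (hunion.trans_eq card_univ.symm)
    exact ⟨i, by simpa [not_or] using hi⟩
  rw [dualFamily_shatters_pair_iff hxy]
  intro p q
  by_cases hp : p <;> by_cases hq : q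
  · obtain ⟨i, hi⟩ := hmeet x y
    exact ⟨i, by simp_all⟩
  · obtain ⟨i, hix, hiy⟩ := only_left x y hxy
    exact ⟨i, by simp_all⟩
  · obtain ⟨i, hiy, hix⟩ := only_left y x hxy.symm
    exact ⟨i, by simp_all⟩
  · obtain ⟨i, hix, hiy⟩ := neither
    exact ⟨i, by simp_all⟩

lemma exists_shatters_pairs_of_card_le_choose {l : ℕ}
    (hα : Fintype.card α ≤ (2 * l + 1).choose l) :
    ∃ F : Finset (Finset α), F.card ≤ 2 * l + 2 ∧
      ∀ A : Finset α, A.card = 2 → F.Shatters A := by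
  obtain ⟨f⟩ : Nonempty (α ↪ {s : Finset (Fin (2 * l + 1)) // s.card = l}) :=
    Function.Embedding.nonempty_of_card_le (by simpa using hα)
  let g : α → Finset (Option (Fin (2 * l + 1))) := fun x => insertNone (f x : Finset _)
  refine ⟨dualFamily g, (card_dualFamily_le g).trans (by simp), fun A hA => ?_⟩
  have hg : Injective g := insertNone.injective.comp (Subtype.val_injective.comp f.injective)
  exact dualFamily_shatters_of_intersecting (k := l + 1) hg (fun x => by simp [g, (f x).2])
    (fun x y => ⟨none, by simp [g]⟩)
    (by simp only [Fintype.card_option, Fintype.card_fin]; omega) hA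

end Dual

end

theorem C_two_bounds_general {α : Type*} [Fintype α] [DecidableEq α] (l n : ℕ)
    (hn1 : (2 * l - 1).choose (l - 1) < n) (hn2 : n ≤ (2 * l + 1).choose l)
    (hcard : Fintype.card α = n) :
    (∀ F : Finset (Finset α), (∀ A : Finset α, A.card = 2 → F.Shatters A) →
      2 * l ≤ F.card) ∧
    (∃ F : Finset (Finset α), F.card ≤ 2 * l + 2 ∧
      ∀ A : Finset α, A.card = 2 → F.Shatters A) := by
  subst hcard
  exact ⟨fun F hF => le_card_of_shatters_pairs hn1 hF,
    exists_shatters_pairs_of_card_le_choose hn2⟩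

/-- If `l ≥ 1` and `binom(2l-1, l-1) < n ≤ binom(2l+1, l)` and `|S| = n`, then every
family of subsets of `S` shattering every 2-element subset has cardinality at least
`2l`, and some family of cardinality at most `2l + 2` shatters every 2-element subset;
i.e. `2l ≤ C(2,n) ≤ 2l + 2`. -/
theorem C_two_bounds {α : Type*} [Fintype α] [DecidableEq α] (l n : ℕ) (hl : 1 ≤ l)
    (hn1 : (2 * l - 1).choose (l - 1) < n) (hn2 : n ≤ (2 * l + 1).choose l)
    (hcard : Fintype.card α = n) :
    (∀ F : Finset (Finset α), (∀ A : Finset α, A.card = 2 → F.Shatters A) →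
      2 * l ≤ F.card) ∧
    (∃ F : Finset (Finset α), F.card ≤ 2 * l + 2 ∧
      ∀ A : Finset α, A.card = 2 → F.Shatters A) :=
  C_two_bounds_general l n hn1 hn2 hcard
end

section
/- Let l ≥ 1 be an integer and let n satisfy binom(2l−1, l−1) < n ≤ binom(2l, l−1). Let S be a finite set with |S| = n. Then there exists a family of subsets of S of cardinality at most 2l + 1 that shatters every 2-element subset of S; i.e. C(2,n) ≤ 2l + 1. -/
/-!
Record a family of sets `E_b` (indexed by a ground set `B`) dually, by attaching to each point
`x ∈ S` the set `T x = {b | x ∈ E_b} ⊆ B`. The family shatters `{x, y}` exactly when all four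
Venn regions of `T x` and `T y` are nonempty. Take `B` of size `2l + 1` with a marked point and
let the `T x` be distinct `l`-subsets of `B` through the marked point; there are
`binom(2l, l-1)` of them. Two of them meet, neither contains the other, and together they
have at most `2l` points, so they leave a point of `B` uncovered.
-/

open Finset

section IncidenceFamily

variable {α β : Type*} [Fintype α] [DecidableEq α] [Fintype β] [DecidableEq β]

def incidenceFamily (T : α → Finset β) : Finset (Finset α) :=
  univ.image fun b => univ.filter fun x => b ∈ T x

lemma card_incidenceFamily_le (T : α → Finset β) :
    (incidenceFamily T).card ≤ Fintype.card β :=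
  card_image_le

lemma shatters_incidenceFamily {T : α → Finset β} {A : Finset α}
    (h : ∀ u ⊆ A, ∃ b, ∀ z ∈ A, b ∈ T z ↔ z ∈ u) : (incidenceFamily T).Shatters A := by
  intro u hu
  obtain ⟨b, hb⟩ := h u hu
  refine ⟨_, mem_image_of_mem _ (mem_univ b), ?_⟩
  ext z
  simp only [mem_inter, mem_filter, mem_univ, true_and]
  exact ⟨fun ⟨hz, hbz⟩ => (hb z hz).mp hbz, fun hz => ⟨hu hz, (hb z (hu hz)).mpr hz⟩⟩

lemma shatters_pair_incidenceFamily {T : α → Finset β} {x y : α}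
    (h : ∀ P Q : Prop, ∃ b, (b ∈ T x ↔ P) ∧ (b ∈ T y ↔ Q)) :
    (incidenceFamily T).Shatters {x, y} := by
  refine shatters_incidenceFamily fun u _ => ?_
  obtain ⟨b, hbx, hby⟩ := h (x ∈ u) (y ∈ u)
  refine ⟨b, fun z hz => ?_⟩
  rcases mem_insert.mp hz with rfl | hz
  · exact hbx
  · rw [mem_singleton.mp hz]
    exact hby

end IncidenceFamily

section VennRegions

variable {β : Type*} [Fintype β] [DecidableEq β] {s t : Finset β}

lemma exists_mem_iff_and_mem_iff_of_venn (hst : (s ∩ t).Nonempty) (hs : ¬s ⊆ t) (ht : ¬t ⊆ s)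
    (hcover : s ∪ t ≠ univ) (P Q : Prop) : ∃ b, (b ∈ s ↔ P) ∧ (b ∈ t ↔ Q) := by
  by_cases hP : P <;> by_cases hQ : Q <;> simp only [hP, hQ, iff_true, iff_false]
  · simpa [Finset.Nonempty] using hst
  · simpa [not_subset] using hs
  · simpa [not_subset, and_comm] using ht
  · simpa [eq_univ_iff_forall] using hcover

lemma exists_mem_iff_and_mem_iff_of_card_eq {k : ℕ} (hne : s ≠ t) (hs : s.card = k)
    (ht : t.card = k) (hst : (s ∩ t).Nonempty) (hk : 2 * k < Fintype.card β) (P Q : Prop) :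
    ∃ b, (b ∈ s ↔ P) ∧ (b ∈ t ↔ Q) := by
  have not_subset_of_ne {s t : Finset β} (hne : s ≠ t) (hcard : t.card ≤ s.card) : ¬s ⊆ t :=
    fun hsub => hne (eq_of_subset_of_card_le hsub hcard)
  have hcover : s ∪ t ≠ univ := by
    intro hunion
    have := card_union_le s t
    rw [hunion, card_univ] at this
    omega
  exact exists_mem_iff_and_mem_iff_of_venn hst (not_subset_of_ne hne (by omega))
    (not_subset_of_ne hne.symm (by omega)) hcover P Q

end VennRegions

theorem C_two_upper_improved_general {α : Type*} [Fintype α] [DecidableEq α] (l n : ℕ)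
    (hl : 1 ≤ l) (hn2 : n ≤ (2 * l).choose (l - 1))
    (hcard : Fintype.card α = n) :
    ∃ F : Finset (Finset α), F.card ≤ 2 * l + 1 ∧
      ∀ A : Finset α, A.card = 2 → F.Shatters A := by
  obtain ⟨g⟩ : Nonempty (α ↪ powersetCard (l - 1) (univ : Finset (Fin (2 * l)))) := by
    rw [Function.Embedding.nonempty_iff_card_le, Fintype.card_coe, card_powersetCard, card_univ,
      Fintype.card_fin, hcard]
    exact hn2
  let T : α → Finset (Option (Fin (2 * l))) := fun x => insertNone (g x : Finset (Fin (2 * l)))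
  have card_T (x : α) : (T x).card = l := by
    rw [card_insertNone, (mem_powersetCard.mp (g x).2).2]
    omega
  refine ⟨incidenceFamily T, by simpa using card_incidenceFamily_le T, fun A hA => ?_⟩
  obtain ⟨x, y, hxy, rfl⟩ := card_eq_two.mp hA
  refine shatters_pair_incidenceFamily
    (exists_mem_iff_and_mem_iff_of_card_eq ?_ (card_T x) (card_T y) ?_ (by simp))
  · exact fun h => hxy (g.injective (Subtype.ext (insertNone.injective h)))
  · exact ⟨none, mem_inter.mpr ⟨none_mem_insertNone, none_mem_insertNone⟩⟩

/-- If `l ≥ 1` and `binom(2l-1, l-1) < n ≤ binom(2l, l-1)` and `|S| = n`, then some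
family of subsets of `S` of cardinality at most `2l + 1` shatters every 2-element
subset of `S`; i.e. `C(2,n) ≤ 2l + 1`. -/
theorem C_two_upper_improved {α : Type*} [Fintype α] [DecidableEq α] (l n : ℕ)
    (hl : 1 ≤ l) (hn1 : (2 * l - 1).choose (l - 1) < n) (hn2 : n ≤ (2 * l).choose (l - 1))
    (hcard : Fintype.card α = n) :
    ∃ F : Finset (Finset α), F.card ≤ 2 * l + 1 ∧
      ∀ A : Finset α, A.card = 2 → F.Shatters A :=
  C_two_upper_improved_general l n hl hn2 hcard
end

section
/- Let S be a finite set with |S| = 5. Then no family F of subsets of S with |F| ≤ 5 shatters every 2-element subset of S, and there exists a family F of subsets of S with |F| = 6 that shatters every 2-element subset of S. In other words, C(2,5) = 6. -/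
def dec5 (m : Nat) : Finset (Fin 5) := Finset.univ.filter (fun i => m.testBit i.val)

def okB (a b : Nat) : Bool :=
  decide (dec5 a ∩ dec5 b).Nonempty && decide (dec5 a \ dec5 b).Nonempty &&
  decide (dec5 b \ dec5 a).Nonempty && decide ((dec5 a ∪ dec5 b)ᶜ).Nonempty

def hasClique : Nat → List Nat → Bool
  | 0, _ => true
  | (k+1), cands =>
      cands.any fun m => hasClique k (cands.filter fun m' => decide (m < m') && okB m m')

theorem no5 : hasClique 5 (List.range 32) = false := by decide

theorem dec5_surj : ∀ s : Finset (Fin 5), ∃ m, m < 32 ∧ dec5 m = s := by decide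

theorem clique_spec : ∀ (l : List Nat) (cands : List Nat),
    l.Pairwise (fun a b => a < b ∧ okB a b = true) → (∀ m ∈ l, m ∈ cands) →
    hasClique l.length cands = true := by
  intro l
  induction l with
  | nil => intro cands _ _; rfl
  | cons m rest ih =>
    intro cands hpw hsub
    rw [List.pairwise_cons] at hpw
    simp only [List.length_cons, hasClique, List.any_eq_true]
    refine ⟨m, hsub m List.mem_cons_self, ih _ hpw.2 ?_⟩
    intro m' hm'
    rw [List.mem_filter]
    refine ⟨hsub m' (List.mem_cons_of_mem _ hm'), ?_⟩
    rcases hpw.1 m' hm' with ⟨h1, h2⟩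
    simp [h1, h2]

theorem no_five (g : Fin 5 → Finset (Fin 5))
    (h : ∀ i j, i ≠ j → (g i ∩ g j).Nonempty ∧ (g i \ g j).Nonempty ∧
      (g j \ g i).Nonempty ∧ ((g i ∪ g j)ᶜ).Nonempty) : False := by
  choose m hm32 hdec using fun i => dec5_surj (g i)
  have hginj : Function.Injective g := by
    intro i j hij
    by_contra hne
    obtain ⟨x, hx⟩ := (h i j hne).2.1
    rw [hij] at hx
    simp at hx
  have hminj : Function.Injective m := by
    intro i j hij
    exact hginj (by rw [← hdec i, ← hdec j, hij])
  set M : Finset Nat := Finset.image m Finset.univ with hM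
  have hcardM : M.card = 5 := by
    rw [hM, Finset.card_image_of_injective _ hminj, Finset.card_univ, Fintype.card_fin]
  set l := M.sort (· ≤ ·) with hl
  have hlen : l.length = 5 := by rw [hl, Finset.length_sort, hcardM]
  have hmemM : ∀ a ∈ l, a ∈ M := fun a ha => (Finset.mem_sort _).1 ha
  have hsorted : l.Pairwise (· < ·) := (Finset.sortedLT_sort M).pairwise
  have hpw : l.Pairwise (fun a b => a < b ∧ okB a b = true) := by
    refine List.Pairwise.imp_of_mem ?_ hsorted
    intro a b ha hb hab
    refine ⟨hab, ?_⟩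
    obtain ⟨i, -, hi⟩ := Finset.mem_image.1 (hmemM a ha)
    obtain ⟨j, -, hj⟩ := Finset.mem_image.1 (hmemM b hb)
    have hij : i ≠ j := by
      rintro rfl
      rw [hi] at hj
      exact absurd hj (ne_of_lt hab)
    obtain ⟨h1, h2, h3, h4⟩ := h i j hij
    have da : dec5 a = g i := by rw [← hi, hdec i]
    have db : dec5 b = g j := by rw [← hj, hdec j]
    simp only [okB, Bool.and_eq_true, decide_eq_true_eq, da, db]
    exact ⟨⟨⟨h1, h2⟩, h3⟩, h4⟩
  have hrange : ∀ a ∈ l, a ∈ List.range 32 := by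
    intro a ha
    obtain ⟨i, -, hi⟩ := Finset.mem_image.1 (hmemM a ha)
    exact List.mem_range.2 (hi ▸ hm32 i)
  have := clique_spec l (List.range 32) hpw hrange
  rw [hlen, no5] at this
  exact Bool.noConfusion this

def F6 : Finset (Finset (Fin 5)) :=
  {Finset.univ, {0,1,2,3}, {0,4}, {1}, {2,4}, {3}}

theorem F6card : F6.card = 6 := by decide

theorem F6shat : ∀ A : Finset (Fin 5), A.card = 2 → F6.Shatters A := by decide

/-- **C(2,5) = 6.** If `|S| = 5`, then no family of at most 5 subsets of `S` shatters
every 2-element subset of `S`, while some family of 6 subsets does. -/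
theorem C_two_five {α : Type*} [Fintype α] [DecidableEq α]
    (hcard : Fintype.card α = 5) :
    (∀ F : Finset (Finset α), F.card ≤ 5 →
      ¬ ∀ A : Finset α, A.card = 2 → F.Shatters A) ∧
    (∃ F : Finset (Finset α), F.card = 6 ∧
      ∀ A : Finset α, A.card = 2 → F.Shatters A) := by
  classical
  have e : α ≃ Fin 5 := Fintype.equivFinOfCardEq hcard
  constructor
  · intro F hF5 hshat
    have hcle : Fintype.card {E // E ∈ F} ≤ Fintype.card (Fin 5) := by
      rw [Fintype.card_coe, Fintype.card_fin]; exact hF5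
    obtain ⟨ι⟩ := Function.Embedding.nonempty_of_card_le hcle
    set g : Fin 5 → Finset (Fin 5) := fun i =>
      Finset.univ.filter (fun k => ∃ E : {E // E ∈ F}, ι E = k ∧ e.symm i ∈ E.1) with hg
    have memg : ∀ (i : Fin 5) (k : Fin 5),
        k ∈ g i ↔ ∃ E : {E // E ∈ F}, ι E = k ∧ e.symm i ∈ E.1 := by
      intro i k; simp [hg]
    apply no_five g
    intro i j hij
    have hxy : e.symm i ≠ e.symm j := fun hh => hij (e.symm.injective hh)
    set x := e.symm i with hx
    set y := e.symm j with hy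
    have hA : ({x, y} : Finset α).card = 2 := Finset.card_pair hxy
    have hs := hshat _ hA
    obtain ⟨E1, hE1F, hE1⟩ := hs (Finset.Subset.refl {x, y})
    obtain ⟨E2, hE2F, hE2⟩ := hs (show ({x} : Finset α) ⊆ {x, y} by
      intro z hz; simp at hz; simp [hz])
    obtain ⟨E3, hE3F, hE3⟩ := hs (show ({y} : Finset α) ⊆ {x, y} by
      intro z hz; simp at hz; simp [hz])
    obtain ⟨E4, hE4F, hE4⟩ := hs (Finset.empty_subset {x, y})
    have hxE1 : x ∈ E1 := by
      have : x ∈ ({x, y} : Finset α) ∩ E1 := by rw [hE1]; simp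
      exact (Finset.mem_inter.1 this).2
    have hyE1 : y ∈ E1 := by
      have : y ∈ ({x, y} : Finset α) ∩ E1 := by rw [hE1]; simp
      exact (Finset.mem_inter.1 this).2
    have hxE2 : x ∈ E2 := by
      have : x ∈ ({x, y} : Finset α) ∩ E2 := by rw [hE2]; simp
      exact (Finset.mem_inter.1 this).2
    have hyE2 : y ∉ E2 := by
      intro hyE
      have : y ∈ ({x, y} : Finset α) ∩ E2 := Finset.mem_inter.2 ⟨by simp, hyE⟩
      rw [hE2] at this
      simp at this
      exact hxy this.symm
    have hyE3 : y ∈ E3 := by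
      have : y ∈ ({x, y} : Finset α) ∩ E3 := by rw [hE3]; simp
      exact (Finset.mem_inter.1 this).2
    have hxE3 : x ∉ E3 := by
      intro hxE
      have : x ∈ ({x, y} : Finset α) ∩ E3 := Finset.mem_inter.2 ⟨by simp, hxE⟩
      rw [hE3] at this
      simp at this
      exact hxy this
    have hxE4 : x ∉ E4 := by
      intro hxE
      have : x ∈ ({x, y} : Finset α) ∩ E4 := Finset.mem_inter.2 ⟨by simp, hxE⟩
      rw [hE4] at this
      simp at this
    have hyE4 : y ∉ E4 := by
      intro hyE
      have : y ∈ ({x, y} : Finset α) ∩ E4 := Finset.mem_inter.2 ⟨by simp, hyE⟩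
      rw [hE4] at this
      simp at this
    refine ⟨⟨ι ⟨E1, hE1F⟩, ?_⟩, ⟨ι ⟨E2, hE2F⟩, ?_⟩, ⟨ι ⟨E3, hE3F⟩, ?_⟩, ⟨ι ⟨E4, hE4F⟩, ?_⟩⟩
    · exact Finset.mem_inter.2 ⟨(memg i _).2 ⟨_, rfl, hxE1⟩, (memg j _).2 ⟨_, rfl, hyE1⟩⟩
    · refine Finset.mem_sdiff.2 ⟨(memg i _).2 ⟨_, rfl, hxE2⟩, ?_⟩
      intro hk
      obtain ⟨E', hE', hyE'⟩ := (memg j _).1 hk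
      have : E' = ⟨E2, hE2F⟩ := ι.injective hE'
      rw [this] at hyE'
      exact hyE2 hyE'
    · refine Finset.mem_sdiff.2 ⟨(memg j _).2 ⟨_, rfl, hyE3⟩, ?_⟩
      intro hk
      obtain ⟨E', hE', hxE'⟩ := (memg i _).1 hk
      have : E' = ⟨E3, hE3F⟩ := ι.injective hE'
      rw [this] at hxE'
      exact hxE3 hxE'
    · rw [Finset.mem_compl, Finset.mem_union]
      rintro (hk | hk)
      · obtain ⟨E', hE', hxE'⟩ := (memg i _).1 hk
        have : E' = ⟨E4, hE4F⟩ := ι.injective hE'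
        rw [this] at hxE'
        exact hxE4 hxE'
      · obtain ⟨E', hE', hyE'⟩ := (memg j _).1 hk
        have : E' = ⟨E4, hE4F⟩ := ι.injective hE'
        rw [this] at hyE'
        exact hyE4 hyE'
  · refine ⟨F6.image (fun E => E.image e.symm), ?_, ?_⟩
    · rw [Finset.card_image_of_injective _ (Finset.image_injective e.symm.injective), F6card]
    · intro A hA
      have hA' : (A.image e).card = 2 := by
        rw [Finset.card_image_of_injective _ e.injective, hA]
      have hs := F6shat _ hA'
      intro t ht
      obtain ⟨u, huF, hu⟩ := hs (Finset.image_subset_image ht)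
      refine ⟨u.image e.symm, Finset.mem_image_of_mem _ huF, ?_⟩
      have hAe : (A.image e).image e.symm = A := by
        rw [Finset.image_image]; simp
      calc A ∩ u.image e.symm = (A.image e).image e.symm ∩ u.image e.symm := by rw [hAe]
        _ = ((A.image e) ∩ u).image e.symm := (Finset.image_inter _ _ e.symm.injective).symm
        _ = (t.image e).image e.symm := by rw [hu]
        _ = t := by rw [Finset.image_image]; simp
end

section
/- Let S be a finite set with |S| = n ≥ 4. Then there exists a separating family F₀ of subsets of S (i.e., for all distinct a, b ∈ S there exists E ∈ F₀ with a ∈ E and b ∉ E) whose cardinality N satisfies N ≤ 2 + log₂ n + (1/2)·log₂ log₂ n ≤ 3·log₂ n. -/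
open Real

/-! Code the elements of `S` injectively by `⌊N/2⌋`-subsets of `{0, …, N-1}` and let `Eᵢ` be the
set of elements whose code contains `i`. Distinct sets of equal size are incomparable, so for
`a ≠ b` some `i` lies in the code of `a` but not in that of `b`, and `{E₀, …, E_{N-1}}` separates.
Such a code exists as soon as `n ≤ C(N, ⌊N/2⌋)`, and the elementary estimate
`4 ^ N ≤ 4 ⌈N/2⌉ C(N, ⌊N/2⌋)²` shows that `N = ⌊2 + log₂ n + ½ log₂ log₂ n⌋` is large enough. -/

def IsSeparating {α : Type*} (F : Finset (Finset α)) : Prop :=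
  ∀ a b : α, a ≠ b → ∃ E ∈ F, a ∈ E ∧ b ∉ E

theorem exists_isSeparating_card_le_of_card_le_choose {α : Type*} [Fintype α] {N k : ℕ}
    (h : Fintype.card α ≤ N.choose k) : ∃ F : Finset (Finset α), IsSeparating F ∧ F.card ≤ N := by
  classical
  obtain ⟨code⟩ : Nonempty (α ↪ {s : Finset (Fin N) // s.card = k}) :=
    Function.Embedding.nonempty_of_card_le (by simpa [Fintype.card_finset_len] using h)
  refine ⟨Finset.univ.image fun i => ({a | i ∈ (code a).1} : Finset α), fun a b hab => ?_,
    Finset.card_image_le.trans (by simp)⟩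
  have hne : (code a).1 ≠ (code b).1 := fun he => hab (code.injective (Subtype.ext he))
  have hns : ¬ (code a).1 ⊆ (code b).1 := fun hs =>
    hne (Finset.eq_of_subset_of_card_le hs (by rw [(code a).2, (code b).2]))
  obtain ⟨i, hia, hib⟩ := Finset.not_subset.mp hns
  exact ⟨_, Finset.mem_image_of_mem _ (Finset.mem_univ i), by simpa using hia, by simpa using hib⟩

namespace Nat

theorem sixteen_pow_le_mul_centralBinom_sq {m : ℕ} (hm : 0 < m) :
    16 ^ m ≤ 4 * m * m.centralBinom ^ 2 := by
  induction m, hm using Nat.le_induction with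
  | base => decide
  | succ m hm ih =>
    refine Nat.le_of_mul_le_mul_left ?_ (show 0 < (m + 1) ^ 2 by positivity)
    calc (m + 1) ^ 2 * 16 ^ (m + 1)
        = 16 * (m + 1) ^ 2 * 16 ^ m := by ring
      _ ≤ 16 * (m + 1) ^ 2 * (4 * m * m.centralBinom ^ 2) := by gcongr
      _ = 4 * m * (m + 1) * (16 * (m + 1) * m.centralBinom ^ 2) := by ring
      _ ≤ (2 * m + 1) ^ 2 * (16 * (m + 1) * m.centralBinom ^ 2) := by gcongr; nlinarith
      _ = (m + 1) ^ 2 * (4 * (m + 1) * (m + 1).centralBinom ^ 2) := by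
        rw [show (m + 1) ^ 2 * (4 * (m + 1) * (m + 1).centralBinom ^ 2)
          = 4 * (m + 1) * ((m + 1) * (m + 1).centralBinom) ^ 2 by ring, succ_mul_centralBinom_succ]
        ring

theorem centralBinom_succ_eq_two_mul_choose (m : ℕ) :
    (m + 1).centralBinom = 2 * (2 * m + 1).choose m := by
  rw [centralBinom_eq_two_mul_choose, show 2 * (m + 1) = 2 * m + 1 + 1 by ring, choose_succ_succ,
    choose_symm_half]
  ring

theorem four_pow_le_mul_choose_half_sq {N : ℕ} (hN : 0 < N) :
    4 ^ N ≤ 4 * ((N + 1) / 2) * N.choose (N / 2) ^ 2 := by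
  rcases Nat.even_or_odd' N with ⟨m, rfl | rfl⟩
  · have hm : 0 < m := by omega
    rw [show (2 * m + 1) / 2 = m by omega, show 2 * m / 2 = m by omega, pow_mul,
      ← centralBinom_eq_two_mul_choose]
    exact sixteen_pow_le_mul_centralBinom_sq hm
  · have h := sixteen_pow_le_mul_centralBinom_sq m.succ_pos
    rw [centralBinom_succ_eq_two_mul_choose, pow_succ, show 16 = 4 ^ 2 by rfl, ← pow_mul] at h
    rw [show (2 * m + 1 + 1) / 2 = m + 1 by omega, show (2 * m + 1) / 2 = m by omega, pow_succ]
    linarith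

end Nat

namespace Real

theorem natCast_le_mul_logb_of_pow_le {b x : ℝ} {p q : ℕ} (hb : 1 < b)
    (h : b ^ p ≤ x ^ q) : (p : ℝ) ≤ q * logb b x := by
  have := logb_le_logb_of_le hb (pow_pos (by linarith) p) h
  rwa [logb_pow, logb_pow, logb_self_eq_one hb, mul_one] at this

theorem logb_two_le_two_mul_sub_one {y : ℝ} (hy : 1 ≤ y) : logb 2 y ≤ 2 * (y - 1) := by
  have hlog : log y ≤ y - 1 := log_le_sub_one_of_pos (by linarith)
  have hlog2 : 1 / 2 < log 2 := by linarith [log_two_gt_d9]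
  rw [logb, div_le_iff₀ (by linarith)]
  nlinarith

theorem logb_two_le_half_self {x : ℝ} (hx : 4 ≤ x) : logb 2 x ≤ x / 2 := by
  have h4 : logb 2 4 = 2 := by
    rw [show (4 : ℝ) = 2 ^ 2 by norm_num, logb_pow, logb_self_eq_one one_lt_two]
    norm_num
  have := logb_two_le_two_mul_sub_one (y := x / 4) (by linarith)
  rw [logb_div (by linarith) (by norm_num), h4] at this
  linarith

end Real

noncomputable def separatingBound (n : ℕ) : ℝ :=
  2 + logb 2 n + 1 / 2 * logb 2 (logb 2 n)

theorem two_le_logb_of_four_le {n : ℕ} (hn : 4 ≤ n) : 2 ≤ logb 2 n := by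
  simpa using natCast_le_mul_logb_of_pow_le (b := 2) (x := n) (p := 2) (q := 1) one_lt_two
    (by norm_num; exact_mod_cast hn)

theorem one_le_logb_logb_of_four_le {n : ℕ} (hn : 4 ≤ n) : 1 ≤ logb 2 (logb 2 n) := by
  simpa using natCast_le_mul_logb_of_pow_le (p := 1) (q := 1) one_lt_two
    (by simpa using two_le_logb_of_four_le hn)

theorem separatingBound_le_three_mul_logb {n : ℕ} (hn : 4 ≤ n) :
    separatingBound n ≤ 3 * logb 2 n := by
  have hL := two_le_logb_of_four_le hn
  have := logb_two_le_two_mul_sub_one (hL.trans' one_le_two)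
  unfold separatingBound
  linarith

theorem natCast_le_of_two_mul_sub_one_le {k : ℕ} {L : ℝ} (hL : 3 ≤ L)
    (hk : 2 * (k : ℝ) - 1 ≤ 2 + L + 1 / 2 * logb 2 L) : (k : ℝ) ≤ L := by
  by_contra! hLk
  -- integrality of `k` is essential: it gives `4 ≤ k`, where `log₂ k ≤ k / 2` holds
  have hk4 : (4 : ℝ) ≤ k := by
    have : 3 < k := by exact_mod_cast hL.trans_lt hLk
    exact_mod_cast this
  have := (logb_le_logb_of_le one_lt_two (by linarith) hLk.le).trans (logb_two_le_half_self hk4)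
  linarith

theorem sq_mul_logb_le_four_pow {n N : ℕ} (hn : 2 ≤ n)
    (hN : 2 + 2 * logb 2 n + logb 2 (logb 2 n) ≤ 2 * N) :
    (n : ℝ) ^ 2 * (4 * logb 2 n) ≤ 4 ^ N := by
  have hn0 : (0 : ℝ) < n := by positivity
  have hL : 0 < logb 2 n := logb_pos one_lt_two (by exact_mod_cast hn)
  rw [← logb_le_logb (b := 2) one_lt_two (by positivity) (by positivity), logb_mul (by positivity)
    (by positivity), logb_mul (by norm_num) hL.ne', logb_pow, logb_pow,
    show (4 : ℝ) = 2 ^ 2 by norm_num, logb_pow, logb_self_eq_one one_lt_two]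
  push_cast
  linarith

theorem le_choose_half_floor_separatingBound {n : ℕ} (hn : 8 ≤ n) :
    n ≤ ⌊separatingBound n⌋₊.choose (⌊separatingBound n⌋₊ / 2) := by
  set N := ⌊separatingBound n⌋₊
  have hL : 3 ≤ logb 2 n := by
    simpa using natCast_le_mul_logb_of_pow_le (b := 2) (x := n) (p := 3) (q := 1) one_lt_two
      (by norm_num; exact_mod_cast hn)
  have hlogL := one_le_logb_logb_of_four_le (n := n) (by omega)
  have hB : 0 ≤ separatingBound n := by unfold separatingBound; linarith
  have hNB : (N : ℝ) ≤ separatingBound n := Nat.floor_le hB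
  have hBN : separatingBound n < N + 1 := Nat.lt_floor_add_one _
  unfold separatingBound at hNB hBN
  have hN : 0 < N := by exact_mod_cast (show (0 : ℝ) < N by linarith)
  have hk : ((N + 1) / 2 : ℕ) ≤ logb 2 n := by
    refine natCast_le_of_two_mul_sub_one_le hL ?_
    have : (2 * ((N + 1) / 2 : ℕ) : ℝ) ≤ N + 1 := by exact_mod_cast Nat.mul_div_le (N + 1) 2
    linarith
  have hpow : 4 * ((N + 1) / 2) * n ^ 2 ≤ 4 ^ N := by
    have h := sq_mul_logb_le_four_pow (n := n) (N := N) (by omega) (by linarith)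
    have : (4 * ((N + 1) / 2 : ℕ) * n ^ 2 : ℝ) ≤ 4 ^ N :=
      calc (4 * ((N + 1) / 2 : ℕ) * n ^ 2 : ℝ) = n ^ 2 * (4 * ((N + 1) / 2 : ℕ)) := by ring
        _ ≤ n ^ 2 * (4 * logb 2 n) := by gcongr
        _ ≤ 4 ^ N := h
    exact_mod_cast this
  have hsq : n ^ 2 ≤ N.choose (N / 2) ^ 2 :=
    Nat.le_of_mul_le_mul_left (hpow.trans (Nat.four_pow_le_mul_choose_half_sq hN)) (by omega)
  exact (Nat.pow_le_pow_iff_left two_ne_zero).mp hsq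

theorem exists_le_choose_half_le_separatingBound {n : ℕ} (hn : 4 ≤ n) :
    ∃ N : ℕ, n ≤ N.choose (N / 2) ∧ (N : ℝ) ≤ separatingBound n := by
  have hL := two_le_logb_of_four_le hn
  have hlogL := one_le_logb_logb_of_four_le hn
  rcases (show n ≤ 6 ∨ n = 7 ∨ 8 ≤ n by omega) with hn6 | rfl | hn8
  · refine ⟨4, hn6.trans (by decide), ?_⟩
    unfold separatingBound
    push_cast
    linarith
  · refine ⟨5, by decide, ?_⟩
    have : 5 ≤ 2 * logb 2 7 := by
      exact_mod_cast natCast_le_mul_logb_of_pow_le (p := 5) (q := 2) one_lt_two (by norm_num)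
    unfold separatingBound
    norm_num at hlogL ⊢
    linarith
  · refine ⟨_, le_choose_half_floor_separatingBound hn8, Nat.floor_le ?_⟩
    unfold separatingBound
    linarith

theorem exists_small_separating_family_general {α : Type*} [Fintype α] (n : ℕ)
    (hn : 4 ≤ n) (hcard : Fintype.card α = n) :
    ∃ F₀ : Finset (Finset α),
      (∀ a b : α, a ≠ b → ∃ E ∈ F₀, a ∈ E ∧ b ∉ E) ∧
      (F₀.card : ℝ) ≤ 2 + Real.logb 2 n + (1 / 2) * Real.logb 2 (Real.logb 2 n) ∧
      2 + Real.logb 2 n + (1 / 2) * Real.logb 2 (Real.logb 2 n) ≤ 3 * Real.logb 2 n := by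
  obtain ⟨N, hnN, hNB⟩ := exists_le_choose_half_le_separatingBound hn
  obtain ⟨F₀, hsep, hF₀⟩ := exists_isSeparating_card_le_of_card_le_choose (α := α) (hcard ▸ hnN)
  exact ⟨F₀, hsep, (Nat.cast_le.mpr hF₀).trans hNB, separatingBound_le_three_mul_logb hn⟩

/-- **Small separating families.** If `|S| = n ≥ 4`, there exists a separating family
`F₀` of subsets of `S` (for all distinct `a, b` some `E ∈ F₀` has `a ∈ E`, `b ∉ E`)
whose cardinality `N` satisfies `N ≤ 2 + log₂ n + (1/2)·log₂ log₂ n ≤ 3·log₂ n`. -/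
theorem exists_small_separating_family {α : Type*} [Fintype α] [DecidableEq α] (n : ℕ)
    (hn : 4 ≤ n) (hcard : Fintype.card α = n) :
    ∃ F₀ : Finset (Finset α),
      (∀ a b : α, a ≠ b → ∃ E ∈ F₀, a ∈ E ∧ b ∉ E) ∧
      (F₀.card : ℝ) ≤ 2 + Real.logb 2 n + (1 / 2) * Real.logb 2 (Real.logb 2 n) ∧
      2 + Real.logb 2 n + (1 / 2) * Real.logb 2 (Real.logb 2 n) ≤ 3 * Real.logb 2 n :=
  exists_small_separating_family_general n hn hcard
end

section
/- Let S be a finite set with |S| = n ≥ 3 and let F be a family of subsets of S with |F| = k that shatters every 3-element subset of S. Then binom(n,2) ≤ binom(k, ⌊k/2⌋). -/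
/-- If `|S| = n ≥ 3` and a family `F` of subsets of `S` with `|F| = k` shatters every
3-element subset of `S`, then `binom(n,2) ≤ binom(k, ⌊k/2⌋)`. -/
theorem choose_two_le_of_shatters_triples {α : Type*} [Fintype α] [DecidableEq α]
    (n k : ℕ) (hn : 3 ≤ n) (hcard : Fintype.card α = n) (F : Finset (Finset α))
    (hk : F.card = k) (hF : ∀ A : Finset α, A.card = 3 → F.Shatters A) :
    n.choose 2 ≤ k.choose (k / 2) := by
  classical
  set P2 := (Finset.univ : Finset α).powersetCard 2 with hP2
  -- key separation lemma
  have key : ∀ P ∈ P2, ∀ Q ∈ P2, P ≠ Q → ∃ E ∈ F, P ⊆ E ∧ ¬ Q ⊆ E := by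
    intro P hP Q hQ hne
    rw [Finset.mem_powersetCard] at hP hQ
    obtain ⟨w, hwQ, hwP⟩ : ∃ w ∈ Q, w ∉ P := by
      by_contra h
      push_neg at h
      exact hne (Finset.eq_of_subset_of_card_le h (by rw [hP.2, hQ.2])).symm
    have hT : (insert w P).card = 3 := by
      rw [Finset.card_insert_of_notMem hwP, hP.2]
    obtain ⟨E, hE, hEP⟩ := hF _ hT (Finset.subset_insert w P)
    refine ⟨E, hE, ?_, ?_⟩
    · intro x hx
      rw [← hEP] at hx
      exact (Finset.mem_inter.1 hx).2
    · intro hQE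
      have : w ∈ insert w P ∩ E :=
        Finset.mem_inter.2 ⟨Finset.mem_insert_self w P, hQE hwQ⟩
      rw [hEP] at this
      exact hwP this
  -- the antichain
  set f : Finset α → Finset {x // x ∈ F} :=
    fun P => F.attach.filter (fun E => P ⊆ E.1) with hf
  set 𝒜 := P2.image f with h𝒜
  have hinj : Set.InjOn f P2 := by
    intro P hP Q hQ hPQ
    by_contra hne
    obtain ⟨E, hE, hPE, hQE⟩ := key P hP Q hQ hne
    have h1 : (⟨E, hE⟩ : {x // x ∈ F}) ∈ f P := by
      simp [hf, hPE]
    rw [hPQ] at h1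
    simp [hf] at h1
    exact hQE h1
  have hanti : IsAntichain (· ⊆ ·) (𝒜 : Set (Finset {x // x ∈ F})) := by
    intro a ha b hb hab hsub
    simp only [h𝒜, Finset.coe_image, Set.mem_image, Finset.mem_coe] at ha hb
    obtain ⟨P, hP, rfl⟩ := ha
    obtain ⟨Q, hQ, rfl⟩ := hb
    have hne : P ≠ Q := fun h => hab (by rw [h])
    obtain ⟨E, hE, hPE, hQE⟩ := key P hP Q hQ hne
    have h1 : (⟨E, hE⟩ : {x // x ∈ F}) ∈ f P := by simp [hf, hPE]
    have h2 := hsub h1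
    simp [hf] at h2
    exact hQE h2
  have hcard𝒜 : 𝒜.card = n.choose 2 := by
    rw [h𝒜, Finset.card_image_of_injOn hinj, hP2, Finset.card_powersetCard,
      Finset.card_univ, hcard]
  have hsperner := IsAntichain.sperner hanti
  rw [hcard𝒜, Fintype.card_coe, hk] at hsperner
  exact hsperner
end
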